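/- Entanglement shared between the two decoders does not increase the classical capacity region of a quantum broadcast channel: the capacity region for transmission of classical messages with degraded message sets over N_{A→B₁B₂}, when Receiver 1 and Receiver 2 share an arbitrary pure entangled state Ψ_{S_{B₁}S_{B₂}} and decode by POVMs on B₁ⁿS_{B₁} and B₂ⁿS_{B₂} respectively, equals the classical capacity region of the same channel without any shared entanglement between the decoders. -/

import Mathlib

open scoped BigOperators ComplexOrder
open Matrix Kronecker Filter

noncomputable section

namespace QBC

/-- A density operator: positive semidefinite with unit trace. -/
def IsDensity {α : Type*} [Fintype α] (ρ : Matrix α α ℂ) : Prop :=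
  ρ.PosSemidef ∧ ρ.trace = 1

/-- The von Neumann entropy (in bits) of a matrix, via its eigenvalues. -/
def vnEntropy {α : Type*} [Fintype α] [DecidableEq α] (ρ : Matrix α α ℂ) : ℝ :=
  if h : ρ.IsHermitian then -∑ i, h.eigenvalues i * Real.logb 2 (h.eigenvalues i) else 0

/-- Partial trace over the second tensor factor. -/
def ptr₂ {α β : Type*} [Fintype β] (ρ : Matrix (α × β) (α × β) ℂ) : Matrix α α ℂ :=
  Matrix.of fun i j => ∑ k : β, ρ (i, k) (j, k)

/-- Partial trace over the first tensor factor. -/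
def ptr₁ {α β : Type*} [Fintype α] (ρ : Matrix (α × β) (α × β) ℂ) : Matrix β β ℂ :=
  Matrix.of fun i j => ∑ k : α, ρ (k, i) (k, j)

/-- The rank-one density operator associated with a (unit) vector. -/
def pureState {α : Type*} (ψ : α → ℂ) : Matrix α α ℂ :=
  Matrix.of fun i j => ψ i * star (ψ j)

/-- The Choi matrix of a linear map on matrices. -/
def choi {α β : Type*} [Fintype α] [DecidableEq α]
    (Φ : Matrix α α ℂ →ₗ[ℂ] Matrix β β ℂ) : Matrix (α × β) (α × β) ℂ :=
  Matrix.of fun p q => Φ (Matrix.single p.1 q.1 1) p.2 q.2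

/-- A quantum channel: completely positive (positive semidefinite Choi matrix, by Choi's
theorem) and trace preserving. -/
def IsCPTP {α β : Type*} [Fintype α] [DecidableEq α] [Fintype β]
    (Φ : Matrix α α ℂ →ₗ[ℂ] Matrix β β ℂ) : Prop :=
  (choi Φ).PosSemidef ∧ ∀ ρ, (Φ ρ).trace = ρ.trace

/-- The tensor product of two linear maps on matrices. -/
def lmTensor {α β γ δ : Type*} [Fintype α] [DecidableEq α] [Fintype γ] [DecidableEq γ]
    (Φ : Matrix α α ℂ →ₗ[ℂ] Matrix β β ℂ) (Ψ : Matrix γ γ ℂ →ₗ[ℂ] Matrix δ δ ℂ) :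
    Matrix (α × γ) (α × γ) ℂ →ₗ[ℂ] Matrix (β × δ) (β × δ) ℂ where
  toFun ρ := Matrix.of fun i j => ∑ p : α, ∑ q : α, ∑ r : γ, ∑ s : γ,
    ρ (p, r) (q, s) * (Φ (Matrix.single p q 1) i.1 j.1 *
      Ψ (Matrix.single r s 1) i.2 j.2)
  map_add' ρ σ := by
    ext i j
    simp [Matrix.add_apply, add_mul, Finset.sum_add_distrib]
  map_smul' c ρ := by
    ext i j
    simp [Matrix.smul_apply, smul_eq_mul, Finset.mul_sum, mul_assoc]

/-- The `n`-fold tensor power of a linear map on matrices. -/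
def tensorPow {α β : Type*} [Fintype α] [DecidableEq α] [Fintype β]
    (Φ : Matrix α α ℂ →ₗ[ℂ] Matrix β β ℂ) (n : ℕ) :
    Matrix (Fin n → α) (Fin n → α) ℂ →ₗ[ℂ] Matrix (Fin n → β) (Fin n → β) ℂ where
  toFun ρ := Matrix.of fun i j => ∑ p : Fin n → α, ∑ q : Fin n → α,
    ρ p q * ∏ t, Φ (Matrix.single (p t) (q t) 1) (i t) (j t)
  map_add' ρ σ := by
    ext i j
    simp [Matrix.add_apply, add_mul, Finset.sum_add_distrib]
  map_smul' c ρ := by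
    ext i j
    simp [Matrix.smul_apply, smul_eq_mul, Finset.mul_sum, mul_assoc]

/-- `n` uses of a broadcast channel, with the output arranged as `B₁ⁿ × B₂ⁿ`. -/
def prodChannel {α β₁ β₂ : Type*} [Fintype α] [DecidableEq α] [Fintype β₁] [Fintype β₂]
    (N : Matrix α α ℂ →ₗ[ℂ] Matrix (β₁ × β₂) (β₁ × β₂) ℂ) (n : ℕ) :
    Matrix (Fin n → α) (Fin n → α) ℂ →ₗ[ℂ]
      Matrix ((Fin n → β₁) × (Fin n → β₂)) ((Fin n → β₁) × (Fin n → β₂)) ℂ :=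
  (Matrix.reindexLinearEquiv ℂ ℂ (Equiv.arrowProdEquivProdArrow (Fin n) (fun _ => β₁) (fun _ => β₂))
    (Equiv.arrowProdEquivProdArrow (Fin n) (fun _ => β₁) (fun _ => β₂))).toLinearMap ∘ₗ tensorPow N n

section cq

variable {X₀ X₁ B₁ B₂ : Type*} [Fintype X₀] [DecidableEq X₀] [Fintype X₁] [DecidableEq X₁]
  [Fintype B₁] [DecidableEq B₁] [Fintype B₂] [DecidableEq B₂]

/-- The classical–quantum state `Σ p(x₀,x₁) |x₀⟩⟨x₀| ⊗ |x₁⟩⟨x₁| ⊗ ρ^{x₀,x₁}`. -/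
def cqState (p : X₀ → X₁ → ℝ) (ρ : X₀ → X₁ → Matrix (B₁ × B₂) (B₁ × B₂) ℂ) :
    Matrix ((X₀ × X₁) × (B₁ × B₂)) ((X₀ × X₁) × (B₁ × B₂)) ℂ :=
  Matrix.of fun a b => if a.1 = b.1 then (p a.1.1 a.1.2 : ℂ) * ρ a.1.1 a.1.2 a.2 b.2 else 0

variable (ρ : Matrix ((X₀ × X₁) × (B₁ × B₂)) ((X₀ × X₁) × (B₁ × B₂)) ℂ)

def redX₀ : Matrix X₀ X₀ ℂ := ptr₂ (ptr₂ ρ)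

def redX₀X₁ : Matrix (X₀ × X₁) (X₀ × X₁) ℂ := ptr₂ ρ

def redB₁ : Matrix B₁ B₁ ℂ := ptr₂ (ptr₁ ρ)

def redB₂ : Matrix B₂ B₂ ℂ := ptr₁ (ptr₁ ρ)

def redX₀B₂ : Matrix (X₀ × B₂) (X₀ × B₂) ℂ :=
  Matrix.of fun i j => ∑ u : X₁, ∑ k : B₁, ρ ((i.1, u), (k, i.2)) ((j.1, u), (k, j.2))

def redX₀B₁ : Matrix (X₀ × B₁) (X₀ × B₁) ℂ :=
  Matrix.of fun i j => ∑ u : X₁, ∑ l : B₂, ρ ((i.1, u), (i.2, l)) ((j.1, u), (j.2, l))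

def redX₁B₂ : Matrix (X₁ × B₂) (X₁ × B₂) ℂ :=
  Matrix.of fun i j => ∑ x : X₀, ∑ k : B₁, ρ ((x, i.1), (k, i.2)) ((x, j.1), (k, j.2))

def redX₀X₁B₁ : Matrix ((X₀ × X₁) × B₁) ((X₀ × X₁) × B₁) ℂ :=
  Matrix.of fun i j => ∑ l : B₂, ρ (i.1, (i.2, l)) (j.1, (j.2, l))

/-- `I(X₀;B₂)_ρ = H(X₀) + H(B₂) − H(X₀B₂)`. -/
def IX₀B₂ : ℝ := vnEntropy (redX₀ ρ) + vnEntropy (redB₂ ρ) - vnEntropy (redX₀B₂ ρ)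

/-- `I(X₁;B₁|X₀)_ρ = H(X₀X₁) + H(X₀B₁) − H(X₀) − H(X₀X₁B₁)`. -/
def IX₁B₁X₀ : ℝ :=
  vnEntropy (redX₀X₁ ρ) + vnEntropy (redX₀B₁ ρ) - vnEntropy (redX₀ ρ) -
    vnEntropy (redX₀X₁B₁ ρ)

/-- `I(X₀X₁;B₁)_ρ = H(X₀X₁) + H(B₁) − H(X₀X₁B₁)`. -/
def IX₀X₁B₁ : ℝ := vnEntropy (redX₀X₁ ρ) + vnEntropy (redB₁ ρ) - vnEntropy (redX₀X₁B₁ ρ)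

end cq

/-- The single-letter rate region `R_Cl(N)` with conferencing capacity `C₁₂`. -/
def RCl {ι β₁ β₂ : Type*} [Fintype ι] [DecidableEq ι] [Fintype β₁] [DecidableEq β₁]
    [Fintype β₂] [DecidableEq β₂]
    (N : Matrix ι ι ℂ →ₗ[ℂ] Matrix (β₁ × β₂) (β₁ × β₂) ℂ) (C₁₂ : ℝ) : Set (ℝ × ℝ) :=
  {r | ∃ (a b : ℕ) (p : Fin a → Fin b → ℝ) (θ : Fin a → Fin b → Matrix ι ι ℂ),
    (∀ x₀ x₁, 0 ≤ p x₀ x₁) ∧ (∑ x₀, ∑ x₁, p x₀ x₁) = 1 ∧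
    (∀ x₀ x₁, IsDensity (θ x₀ x₁)) ∧
    r.1 ≤ IX₀B₂ (cqState p fun x₀ x₁ => N (θ x₀ x₁)) + C₁₂ ∧
    r.2 ≤ IX₁B₁X₀ (cqState p fun x₀ x₁ => N (θ x₀ x₁)) ∧
    r.1 + r.2 ≤ IX₀X₁B₁ (cqState p fun x₀ x₁ => N (θ x₀ x₁))}

/-- A classical code with degraded message sets and conferencing:
`M₀` common messages, `M₁` private messages for User 1, `K` conference messages. -/
structure CCode (ι β₁ β₂ : Type*) [Fintype ι] [DecidableEq ι] [Fintype β₁] [DecidableEq β₁]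
    [Fintype β₂] [DecidableEq β₂] (n M₀ M₁ K : ℕ) where
  enc : Fin M₀ → Fin M₁ → Matrix (Fin n → ι) (Fin n → ι) ℂ
  enc_density : ∀ m₀ m₁, IsDensity (enc m₀ m₁)
  dec1 : Fin M₀ → Fin M₁ → Fin K → Matrix (Fin n → β₁) (Fin n → β₁) ℂ
  dec1_pos : ∀ m₀ m₁ g, (dec1 m₀ m₁ g).PosSemidef
  dec1_sum : (∑ m₀, ∑ m₁, ∑ g, dec1 m₀ m₁ g) = 1
  dec2 : Fin K → Fin M₀ → Matrix (Fin n → β₂) (Fin n → β₂) ℂ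
  dec2_pos : ∀ g m₀, (dec2 g m₀).PosSemidef
  dec2_sum : ∀ g, (∑ m₀, dec2 g m₀) = 1

/-- The probability of error of a classical conferencing code, given the message pair. -/
def CCode.err {ι β₁ β₂ : Type*} [Fintype ι] [DecidableEq ι] [Fintype β₁] [DecidableEq β₁]
    [Fintype β₂] [DecidableEq β₂] {n M₀ M₁ K : ℕ}
    (N : Matrix ι ι ℂ →ₗ[ℂ] Matrix (β₁ × β₂) (β₁ × β₂) ℂ)
    (c : CCode ι β₁ β₂ n M₀ M₁ K) (m₀ : Fin M₀) (m₁ : Fin M₁) : ℝ :=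
  1 - (∑ g, ((c.dec1 m₀ m₁ g ⊗ₖ c.dec2 g m₀) * prodChannel N n (c.enc m₀ m₁)).trace).re

/-- Achievability of a classical rate pair with conferencing. -/
def achievable {ι β₁ β₂ : Type*} [Fintype ι] [DecidableEq ι] [Fintype β₁] [DecidableEq β₁]
    [Fintype β₂] [DecidableEq β₂]
    (N : Matrix ι ι ℂ →ₗ[ℂ] Matrix (β₁ × β₂) (β₁ × β₂) ℂ) (C₁₂ : ℝ) (r : ℝ × ℝ) : Prop :=
  ∀ ε : ℝ, 0 < ε → ∃ n₀ : ℕ, ∀ n, n₀ ≤ n →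
    ∃ (M₀ M₁ K : ℕ) (c : CCode ι β₁ β₂ n M₀ M₁ K),
      (2 : ℝ) ^ ((n : ℝ) * r.1) ≤ M₀ ∧ (2 : ℝ) ^ ((n : ℝ) * r.2) ≤ M₁ ∧
      (K : ℝ) ≤ (2 : ℝ) ^ ((n : ℝ) * C₁₂) ∧ ∀ m₀ m₁, CCode.err N c m₀ m₁ ≤ ε

/-- The classical capacity region with conferencing. -/
def capacityRegion {ι β₁ β₂ : Type*} [Fintype ι] [DecidableEq ι] [Fintype β₁] [DecidableEq β₁]
    [Fintype β₂] [DecidableEq β₂]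
    (N : Matrix ι ι ℂ →ₗ[ℂ] Matrix (β₁ × β₂) (β₁ × β₂) ℂ) (C₁₂ : ℝ) : Set (ℝ × ℝ) :=
  {r | achievable N C₁₂ r}


/-- The trace norm `‖A‖₁ = Tr √(AᴴA)`, via the eigenvalues of `AᴴA`. -/
def traceNorm {α : Type*} [Fintype α] [DecidableEq α] (A : Matrix α α ℂ) : ℝ :=
  ∑ i, Real.sqrt ((Matrix.posSemidef_conjTranspose_mul_self A).1.eigenvalues i)

/-- Coherent information `I(A⟩B)_ρ = H(B) − H(AB)` of a bipartite state on `α × β`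
(the first factor is `A`, the second is `B`). -/
def cohInfo {α β : Type*} [Fintype α] [DecidableEq α] [Fintype β] [DecidableEq β]
    (ρ : Matrix (α × β) (α × β) ℂ) : ℝ :=
  vnEntropy (ptr₁ ρ) - vnEntropy ρ

/-- Quantum mutual information `I(A;B)_ρ = H(A) + H(B) − H(AB)`. -/
def mutualInfo {α β : Type*} [Fintype α] [DecidableEq α] [Fintype β] [DecidableEq β]
    (ρ : Matrix (α × β) (α × β) ℂ) : ℝ :=
  vnEntropy (ptr₂ ρ) + vnEntropy (ptr₁ ρ) - vnEntropy ρ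

/-- A quantum code with quantum conferencing: message systems of dimensions `K₁`, `K₂`
and a conference register of dimension `KG` sent noiselessly from Receiver 1 to Receiver 2. -/
structure QCode (ι β₁ β₂ : Type*) [Fintype ι] [DecidableEq ι] [Fintype β₁] [DecidableEq β₁]
    [Fintype β₂] [DecidableEq β₂] (n K₁ K₂ KG : ℕ) where
  F : Matrix (Fin K₁ × Fin K₂) (Fin K₁ × Fin K₂) ℂ →ₗ[ℂ] Matrix (Fin n → ι) (Fin n → ι) ℂ
  F_cptp : IsCPTP F
  D1 : Matrix (Fin n → β₁) (Fin n → β₁) ℂ →ₗ[ℂ] Matrix (Fin K₁ × Fin KG) (Fin K₁ × Fin KG) ℂ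
  D1_cptp : IsCPTP D1
  D2 : Matrix (Fin KG × (Fin n → β₂)) (Fin KG × (Fin n → β₂)) ℂ →ₗ[ℂ] Matrix (Fin K₂) (Fin K₂) ℂ
  D2_cptp : IsCPTP D2

/-- The state recovered by the decoders: apply the encoder, `n` uses of the channel,
Receiver 1's decoder on `B₁ⁿ`, the noiseless conference link, and Receiver 2's decoder. -/
def QCode.output {ι β₁ β₂ : Type*} [Fintype ι] [DecidableEq ι] [Fintype β₁] [DecidableEq β₁]
    [Fintype β₂] [DecidableEq β₂] {n K₁ K₂ KG : ℕ}
    (N : Matrix ι ι ℂ →ₗ[ℂ] Matrix (β₁ × β₂) (β₁ × β₂) ℂ)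
    (c : QCode ι β₁ β₂ n K₁ K₂ KG)
    (ρ : Matrix (Fin K₁ × Fin K₂) (Fin K₁ × Fin K₂) ℂ) :
    Matrix (Fin K₁ × Fin K₂) (Fin K₁ × Fin K₂) ℂ :=
  lmTensor (LinearMap.id : Matrix (Fin K₁) (Fin K₁) ℂ →ₗ[ℂ] Matrix (Fin K₁) (Fin K₁) ℂ) c.D2
    (Matrix.reindex (Equiv.prodAssoc (Fin K₁) (Fin KG) (Fin n → β₂))
      (Equiv.prodAssoc (Fin K₁) (Fin KG) (Fin n → β₂))
      (lmTensor c.D1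
        (LinearMap.id : Matrix (Fin n → β₂) (Fin n → β₂) ℂ →ₗ[ℂ]
          Matrix (Fin n → β₂) (Fin n → β₂) ℂ)
        (prodChannel N n (c.F ρ))))

/-- The code recovers every message state within trace distance `ε`. -/
def QCode.good {ι β₁ β₂ : Type*} [Fintype ι] [DecidableEq ι] [Fintype β₁] [DecidableEq β₁]
    [Fintype β₂] [DecidableEq β₂] {n K₁ K₂ KG : ℕ}
    (N : Matrix ι ι ℂ →ₗ[ℂ] Matrix (β₁ × β₂) (β₁ × β₂) ℂ)
    (c : QCode ι β₁ β₂ n K₁ K₂ KG) (ε : ℝ) : Prop :=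
  ∀ ρ, IsDensity ρ → (1 / 2) * traceNorm (ρ - QCode.output N c ρ) ≤ ε

/-- Achievability of a quantum rate pair with quantum conferencing of capacity `CQ`. -/
def QAchievable {ι β₁ β₂ : Type*} [Fintype ι] [DecidableEq ι] [Fintype β₁] [DecidableEq β₁]
    [Fintype β₂] [DecidableEq β₂]
    (N : Matrix ι ι ℂ →ₗ[ℂ] Matrix (β₁ × β₂) (β₁ × β₂) ℂ) (CQ : ℝ) (q : ℝ × ℝ) : Prop :=
  ∀ ε : ℝ, 0 < ε → ∃ n₀ : ℕ, ∀ n, n₀ ≤ n →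
    ∃ (K₁ K₂ KG : ℕ) (c : QCode ι β₁ β₂ n K₁ K₂ KG),
      (2 : ℝ) ^ ((n : ℝ) * q.1) ≤ K₁ ∧ (2 : ℝ) ^ ((n : ℝ) * q.2) ≤ K₂ ∧
      (KG : ℝ) ≤ (2 : ℝ) ^ ((n : ℝ) * CQ) ∧ QCode.good N c ε

/-- The quantum capacity of the primitive relay channel: the supremum of rates `Q₂`
such that `(0, Q₂)` is achievable. -/
def relayCapacity {ι β₁ β₂ : Type*} [Fintype ι] [DecidableEq ι] [Fintype β₁] [DecidableEq β₁]
    [Fintype β₂] [DecidableEq β₂]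
    (N : Matrix ι ι ℂ →ₗ[ℂ] Matrix (β₁ × β₂) (β₁ × β₂) ℂ) (CQ : ℝ) : ℝ :=
  sSup {q : ℝ | QAchievable N CQ (0, q)}

/-- The entanglement of formation of a bipartite state on `α × β`,
with respect to the bipartition `α | β`. -/
def EF {α β : Type*} [Fintype α] [DecidableEq α] [Fintype β] [DecidableEq β]
    (ρ : Matrix (α × β) (α × β) ℂ) : ℝ :=
  sInf {x : ℝ | ∃ (m : ℕ) (p : Fin m → ℝ) (ψ : Fin m → α × β → ℂ),
    (∀ i, 0 ≤ p i) ∧ (∑ i, p i) = 1 ∧ (∀ i, (∑ v, ‖ψ i v‖ ^ 2) = 1) ∧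
    ρ = ∑ i, (p i : ℂ) • pureState (ψ i) ∧
    x = ∑ i, p i * vnEntropy (ptr₂ (pureState (ψ i)))}


/-- The identity channel. -/
def idChan (α : Type*) : Matrix α α ℂ →ₗ[ℂ] Matrix α α ℂ := LinearMap.id

/-- A classical code with degraded message sets for the broadcast channel, where the two
decoders share a pure entangled state on systems of dimensions `s₁`, `s₂` and decode by
POVMs on `B₁ⁿ S_{B₁}` and `B₂ⁿ S_{B₂}`, respectively. -/
structure EACode (ι β₁ β₂ : Type*) [Fintype ι] [DecidableEq ι] [Fintype β₁] [DecidableEq β₁]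
    [Fintype β₂] [DecidableEq β₂] (n M₀ M₁ s₁ s₂ : ℕ) where
  enc : Fin M₀ → Fin M₁ → Matrix (Fin n → ι) (Fin n → ι) ℂ
  enc_density : ∀ m₀ m₁, IsDensity (enc m₀ m₁)
  ent : Fin s₁ × Fin s₂ → ℂ
  ent_norm : (∑ v, ‖ent v‖ ^ 2) = 1
  dec1 : Fin M₀ → Fin M₁ → Matrix ((Fin n → β₁) × Fin s₁) ((Fin n → β₁) × Fin s₁) ℂ
  dec1_pos : ∀ m₀ m₁, (dec1 m₀ m₁).PosSemidef
  dec1_sum : (∑ m₀, ∑ m₁, dec1 m₀ m₁) = 1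
  dec2 : Fin M₀ → Matrix ((Fin n → β₂) × Fin s₂) ((Fin n → β₂) × Fin s₂) ℂ
  dec2_pos : ∀ m₀, (dec2 m₀).PosSemidef
  dec2_sum : (∑ m₀, dec2 m₀) = 1

/-- The probability of error of a code with entangled decoders, given the message pair. -/
def EACode.err {ι β₁ β₂ : Type*} [Fintype ι] [DecidableEq ι] [Fintype β₁] [DecidableEq β₁]
    [Fintype β₂] [DecidableEq β₂] {n M₀ M₁ s₁ s₂ : ℕ}
    (N : Matrix ι ι ℂ →ₗ[ℂ] Matrix (β₁ × β₂) (β₁ × β₂) ℂ)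
    (c : EACode ι β₁ β₂ n M₀ M₁ s₁ s₂) (m₀ : Fin M₀) (m₁ : Fin M₁) : ℝ :=
  1 - (((c.dec1 m₀ m₁ ⊗ₖ c.dec2 m₀) *
    Matrix.reindex (Equiv.prodProdProdComm (Fin n → β₁) (Fin n → β₂) (Fin s₁) (Fin s₂))
      (Equiv.prodProdProdComm (Fin n → β₁) (Fin n → β₂) (Fin s₁) (Fin s₂))
      (prodChannel N n (c.enc m₀ m₁) ⊗ₖ pureState c.ent)).trace).re

/-- Achievability of a classical rate pair with entangled decoders. -/
def eaAchievable {ι β₁ β₂ : Type*} [Fintype ι] [DecidableEq ι] [Fintype β₁] [DecidableEq β₁]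
    [Fintype β₂] [DecidableEq β₂]
    (N : Matrix ι ι ℂ →ₗ[ℂ] Matrix (β₁ × β₂) (β₁ × β₂) ℂ) (r : ℝ × ℝ) : Prop :=
  ∀ ε : ℝ, 0 < ε → ∃ n₀ : ℕ, ∀ n, n₀ ≤ n →
    ∃ (M₀ M₁ s₁ s₂ : ℕ) (c : EACode ι β₁ β₂ n M₀ M₁ s₁ s₂),
      (2 : ℝ) ^ ((n : ℝ) * r.1) ≤ M₀ ∧ (2 : ℝ) ^ ((n : ℝ) * r.2) ≤ M₁ ∧
      ∀ m₀ m₁, EACode.err N c m₀ m₁ ≤ ε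

/-- Achievability of a classical rate pair without entanglement between the decoders:
the shared systems are trivial (one-dimensional). -/
def plainAchievable {ι β₁ β₂ : Type*} [Fintype ι] [DecidableEq ι] [Fintype β₁]
    [DecidableEq β₁] [Fintype β₂] [DecidableEq β₂]
    (N : Matrix ι ι ℂ →ₗ[ℂ] Matrix (β₁ × β₂) (β₁ × β₂) ℂ) (r : ℝ × ℝ) : Prop :=
  ∀ ε : ℝ, 0 < ε → ∃ n₀ : ℕ, ∀ n, n₀ ≤ n →
    ∃ (M₀ M₁ : ℕ) (c : EACode ι β₁ β₂ n M₀ M₁ 1 1),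
      (2 : ℝ) ^ ((n : ℝ) * r.1) ≤ M₀ ∧ (2 : ℝ) ^ ((n : ℝ) * r.2) ≤ M₁ ∧
      ∀ m₀ m₁, EACode.err N c m₀ m₁ ≤ ε

/-!
Each receiver of an entanglement-assisted code, taken on its own, decodes correctly with
probability at least `1 - ε`. Tracing a receiver's share `S` of the entangled state out of its
POVM against the reduced state `σ` on `S`, i.e. `Λ ↦ Tr_S[Λ (1 ⊗ σ)]`, gives a POVM on `Bⁿ`
alone with exactly the same success probability, because `Tr[Λ (ρ ⊗ σ)] = Tr[Tr_S[Λ (1 ⊗ σ)] ρ]`.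
If both receivers measure these reduced POVMs, then `(1 - A) ⊗ (1 - B) ≥ 0` gives the union
bound: the joint error is at most the sum of the two marginal errors, hence at most `2ε`, at
unchanged rates and without any shared entanglement.
-/

lemma trace_mul_nonneg {n : Type*} [Fintype n] [DecidableEq n] {A B : Matrix n n ℂ}
    (hA : A.PosSemidef) (hB : B.PosSemidef) : 0 ≤ (A * B).trace := by
  open scoped MatrixOrder in
  obtain ⟨C, rfl⟩ := CStarAlgebra.nonneg_iff_eq_star_mul_self.mp hB.nonneg
  rw [← Matrix.mul_assoc, Matrix.trace_mul_cycle]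
  exact (hA.mul_mul_conjTranspose_same C).trace_nonneg

lemma re_trace_mul_le_of_posSemidef_sub {n : Type*} [Fintype n] [DecidableEq n]
    {A B X : Matrix n n ℂ} (hAB : (B - A).PosSemidef) (hX : X.PosSemidef) :
    (A * X).trace.re ≤ (B * X).trace.re := by
  have h := (Complex.le_def.mp (trace_mul_nonneg hAB hX)).1
  rw [Matrix.sub_mul, Matrix.trace_sub, Complex.sub_re] at h
  simpa using h

lemma posSemidef_one_sub_of_sum_eq_one {n ι : Type*} [DecidableEq n] [Fintype ι]
    {f : ι → Matrix n n ℂ} (hf : ∀ i, (f i).PosSemidef) (hsum : ∑ i, f i = 1) (i : ι) :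
    (1 - f i).PosSemidef := by
  open scoped MatrixOrder in
  rw [← hsum, ← Matrix.le_iff]
  exact Finset.single_le_sum (fun j _ => (hf j).nonneg) (Finset.mem_univ i)

lemma isDensity_pureState {n : Type*} [Fintype n] {ψ : n → ℂ} (hψ : ∑ v, ‖ψ v‖ ^ 2 = 1) :
    IsDensity (pureState ψ) := by
  refine ⟨Matrix.posSemidef_vecMulVec_self_star ψ, ?_⟩
  simp only [Matrix.trace, Matrix.diag, pureState, Matrix.of_apply, Complex.star_def,
    Complex.mul_conj']
  exact_mod_cast hψ

lemma ptr₂_eq_sum_submatrix {α β : Type*} [Fintype β] (ρ : Matrix (α × β) (α × β) ℂ) :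
    ptr₂ ρ = ∑ k, ρ.submatrix (·, k) (·, k) := by
  ext i j
  simp [ptr₂, Matrix.sum_apply]

lemma ptr₁_eq_ptr₂_submatrix_swap {α β : Type*} [Fintype α] (ρ : Matrix (α × β) (α × β) ℂ) :
    ptr₁ ρ = ptr₂ (ρ.submatrix Prod.swap Prod.swap) := rfl

lemma posSemidef_ptr₂ {α β : Type*} [Fintype β] {ρ : Matrix (α × β) (α × β) ℂ}
    (hρ : ρ.PosSemidef) : (ptr₂ ρ).PosSemidef := by
  rw [ptr₂_eq_sum_submatrix]
  exact Matrix.posSemidef_sum _ fun k _ => hρ.submatrix _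

lemma trace_ptr₂ {α β : Type*} [Fintype α] [Fintype β] (ρ : Matrix (α × β) (α × β) ℂ) :
    (ptr₂ ρ).trace = ρ.trace := by
  rw [Matrix.trace, Matrix.trace, Fintype.sum_prod_type]
  rfl

lemma IsDensity.ptr₂ {α β : Type*} [Fintype α] [Fintype β] {ρ : Matrix (α × β) (α × β) ℂ}
    (hρ : IsDensity ρ) : IsDensity (ptr₂ ρ) :=
  ⟨posSemidef_ptr₂ hρ.1, (trace_ptr₂ ρ).trans hρ.2⟩

lemma IsDensity.ptr₁ {α β : Type*} [Fintype α] [Fintype β] {ρ : Matrix (α × β) (α × β) ℂ}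
    (hρ : IsDensity ρ) : IsDensity (ptr₁ ρ) := by
  rw [ptr₁_eq_ptr₂_submatrix_swap]
  refine IsDensity.ptr₂ ⟨hρ.1.submatrix _, ?_⟩
  rw [← hρ.2]
  exact Equiv.sum_comp (Equiv.prodComm β α) fun x => ρ x x

lemma trace_kronecker_one_mul {α β : Type*} [Fintype α] [Fintype β] [DecidableEq β]
    (A : Matrix α α ℂ) (Y : Matrix (α × β) (α × β) ℂ) :
    ((A ⊗ₖ (1 : Matrix β β ℂ)) * Y).trace = (A * ptr₂ Y).trace := by
  simp only [Matrix.trace, Matrix.diag, Matrix.mul_apply, Matrix.kroneckerMap_apply, ptr₂,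
    Matrix.of_apply, Matrix.one_apply, Fintype.sum_prod_type, mul_ite, mul_one, mul_zero,
    ite_mul, zero_mul, Finset.sum_ite_eq, Finset.mem_univ, if_true, Finset.mul_sum]
  exact Finset.sum_congr rfl fun _ _ => Finset.sum_comm

lemma trace_one_kronecker_mul {α β : Type*} [Fintype α] [Fintype β] [DecidableEq α]
    (B : Matrix β β ℂ) (Y : Matrix (α × β) (α × β) ℂ) :
    (((1 : Matrix α α ℂ) ⊗ₖ B) * Y).trace = (B * ptr₁ Y).trace := by
  simp only [Matrix.trace, Matrix.diag_apply, Matrix.mul_apply, Matrix.kroneckerMap_apply,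
    Matrix.one_apply, ite_mul, one_mul, zero_mul, Fintype.sum_prod_type, Finset.sum_ite_irrel,
    Finset.sum_const_zero, Finset.sum_ite_eq, Finset.mem_univ, if_true, ptr₁, Matrix.of_apply,
    Finset.mul_sum]
  rw [Finset.sum_comm]
  exact Finset.sum_congr rfl fun _ _ => Finset.sum_comm

lemma ptr₂_reindex_prodProdProdComm_kronecker {α β γ δ : Type*} [Fintype β] [Fintype δ]
    (ρ : Matrix (α × β) (α × β) ℂ) (τ : Matrix (γ × δ) (γ × δ) ℂ) :
    ptr₂ (Matrix.reindex (Equiv.prodProdProdComm α β γ δ) (Equiv.prodProdProdComm α β γ δ)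
      (ρ ⊗ₖ τ)) = ptr₂ ρ ⊗ₖ ptr₂ τ := by
  ext ⟨i, k⟩ ⟨j, l⟩
  simp [ptr₂, Fintype.sum_prod_type, Finset.sum_mul_sum]

lemma ptr₁_reindex_prodProdProdComm_kronecker {α β γ δ : Type*} [Fintype α] [Fintype γ]
    (ρ : Matrix (α × β) (α × β) ℂ) (τ : Matrix (γ × δ) (γ × δ) ℂ) :
    ptr₁ (Matrix.reindex (Equiv.prodProdProdComm α β γ δ) (Equiv.prodProdProdComm α β γ δ)
      (ρ ⊗ₖ τ)) = ptr₁ ρ ⊗ₖ ptr₁ τ := by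
  ext ⟨i, k⟩ ⟨j, l⟩
  simp [ptr₁, Fintype.sum_prod_type, Finset.sum_mul_sum]

lemma ptr₂_mul_one_kronecker_comm {α β : Type*} [Fintype α] [Fintype β] [DecidableEq α]
    (Y : Matrix (α × β) (α × β) ℂ) (D : Matrix β β ℂ) :
    ptr₂ (Y * ((1 : Matrix α α ℂ) ⊗ₖ D)) = ptr₂ (((1 : Matrix α α ℂ) ⊗ₖ D) * Y) := by
  ext i j
  simp only [ptr₂, Matrix.mul_apply, Matrix.kroneckerMap_apply, Matrix.one_apply, mul_comm,
    mul_ite, mul_one, mul_zero, ite_mul, zero_mul, Fintype.sum_prod_type, Finset.sum_ite_irrel,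
    Finset.sum_const_zero, Finset.sum_ite_eq', Finset.mem_univ, if_true, Matrix.of_apply,
    Finset.sum_ite_eq]
  exact Finset.sum_comm

def ptrAgainst {γ S : Type*} [Fintype γ] [DecidableEq γ] [Fintype S] (σ : Matrix S S ℂ) :
    Matrix (γ × S) (γ × S) ℂ →ₗ[ℂ] Matrix γ γ ℂ where
  toFun Λ := ptr₂ (Λ * ((1 : Matrix γ γ ℂ) ⊗ₖ σ))
  map_add' Λ Λ' := by
    ext i j
    simp [ptr₂, Matrix.add_mul, Finset.sum_add_distrib]
  map_smul' c Λ := by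
    ext i j
    simp [ptr₂, Finset.mul_sum]

section PtrAgainst

variable {γ S : Type*} [Fintype γ] [DecidableEq γ] [Fintype S] [DecidableEq S]
  {σ : Matrix S S ℂ}

lemma trace_ptrAgainst_mul (Λ : Matrix (γ × S) (γ × S) ℂ)
    (ρ : Matrix γ γ ℂ) : (ptrAgainst σ Λ * ρ).trace = (Λ * (ρ ⊗ₖ σ)).trace := by
  have h : ρ ⊗ₖ σ = ((1 : Matrix γ γ ℂ) ⊗ₖ σ) * (ρ ⊗ₖ (1 : Matrix S S ℂ)) := by
    rw [← Matrix.mul_kronecker_mul, Matrix.one_mul, Matrix.mul_one]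
  rw [h, ← Matrix.mul_assoc, Matrix.trace_mul_comm (Λ * _), trace_kronecker_one_mul,
    Matrix.trace_mul_comm]
  rfl

lemma ptrAgainst_one (hσ : σ.trace = 1) : ptrAgainst σ (1 : Matrix (γ × S) (γ × S) ℂ) = 1 := by
  have hσ' : ∑ k, σ k k = 1 := hσ
  ext i j
  simp [ptrAgainst, ptr₂, Matrix.one_apply, hσ']

lemma posSemidef_ptrAgainst (hσ : σ.PosSemidef) {Λ : Matrix (γ × S) (γ × S) ℂ}
    (hΛ : Λ.PosSemidef) : (ptrAgainst σ Λ).PosSemidef := by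
  open scoped MatrixOrder in
  obtain ⟨C, rfl⟩ := CStarAlgebra.nonneg_iff_eq_star_mul_self.mp hσ.nonneg
  have h : (1 : Matrix γ γ ℂ) ⊗ₖ (star C * C)
      = ((1 : Matrix γ γ ℂ) ⊗ₖ C)ᴴ * ((1 : Matrix γ γ ℂ) ⊗ₖ C) := by
    rw [Matrix.conjTranspose_kronecker, Matrix.conjTranspose_one, ← Matrix.mul_kronecker_mul,
      Matrix.one_mul, Matrix.star_eq_conjTranspose]
  -- `Tr_S[Λ (1 ⊗ CᴴC)] = Tr_S[(1 ⊗ C) Λ (1 ⊗ C)ᴴ]`: the partial trace is cyclic for `1 ⊗ D`.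
  change (ptr₂ _).PosSemidef
  rw [h, ← Matrix.mul_assoc, ptr₂_mul_one_kronecker_comm, ← Matrix.mul_assoc]
  exact posSemidef_ptr₂ (hΛ.mul_mul_conjTranspose_same _)

end PtrAgainst

section Channel

variable {α β : Type*} [Fintype α] [DecidableEq α] [Fintype β]

lemma exists_kraus_of_posSemidef_choi {N : Matrix α α ℂ →ₗ[ℂ] Matrix β β ℂ}
    (hN : (choi N).PosSemidef) :
    ∃ K : α × β → β → α → ℂ, ∀ p q a b,
      N (Matrix.single p q 1) a b = ∑ k, K k a p * star (K k b q) := by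
  classical
  open scoped MatrixOrder in
  obtain ⟨B, hB⟩ := CStarAlgebra.nonneg_iff_eq_star_mul_self.mp hN.nonneg
  refine ⟨fun k b p => star (B k (p, b)), fun p q a b => ?_⟩
  change choi N (p, a) (q, b) = _
  simp [hB, Matrix.mul_apply, Matrix.star_eq_conjTranspose]

lemma exists_kraus_tensorPow {N : Matrix α α ℂ →ₗ[ℂ] Matrix β β ℂ} (hN : (choi N).PosSemidef)
    (n : ℕ) : ∃ L : (Fin n → α × β) → Matrix (Fin n → β) (Fin n → α) ℂ,
      ∀ ρ, tensorPow N n ρ = ∑ f, L f * ρ * (L f)ᴴ := by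
  obtain ⟨K, hK⟩ := exists_kraus_of_posSemidef_choi hN
  refine ⟨fun f => Matrix.of fun a r => ∏ t, K (f t) (a t) (r t), fun ρ => ?_⟩
  ext i j
  have hprod : ∀ p q : Fin n → α, ∏ t, N (Matrix.single (p t) (q t) 1) (i t) (j t)
      = ∑ f : Fin n → α × β, (∏ t, K (f t) (i t) (p t)) * star (∏ t, K (f t) (j t) (q t)) := by
    intro p q
    simp_rw [hK, Fintype.prod_sum, Finset.prod_mul_distrib, star_prod]
  simp only [tensorPow, LinearMap.coe_mk, AddHom.coe_mk, hprod, Matrix.sum_apply,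
    Matrix.mul_apply, Matrix.conjTranspose_apply, Matrix.of_apply, Finset.mul_sum, Finset.sum_mul]
  rw [Finset.sum_comm]
  conv_rhs => rw [Finset.sum_comm]
  refine Finset.sum_congr rfl fun q _ => ?_
  rw [Finset.sum_comm]
  exact Finset.sum_congr rfl fun f _ => Finset.sum_congr rfl fun p _ => by ring

lemma trace_single_one (p q : α) :
    (Matrix.single p q (1 : ℂ)).trace = if p = q then 1 else 0 := by
  split_ifs with h
  · rw [h, Matrix.trace_single_eq_same]
  · exact Matrix.trace_single_eq_of_ne p q 1 h

lemma trace_tensorPow {N : Matrix α α ℂ →ₗ[ℂ] Matrix β β ℂ}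
    (hN : ∀ ρ, (N ρ).trace = ρ.trace) (n : ℕ) (ρ : Matrix (Fin n → α) (Fin n → α) ℂ) :
    (tensorPow N n ρ).trace = ρ.trace := by
  have hunit : ∀ p q : Fin n → α,
      ∑ i : Fin n → β, ∏ t, N (Matrix.single (p t) (q t) 1) (i t) (i t)
        = if p = q then 1 else 0 := by
    intro p q
    rw [← Fintype.prod_sum fun t b => N (Matrix.single (p t) (q t) 1) b b]
    have htr : ∀ t, ∑ b, N (Matrix.single (p t) (q t) 1) b b = if p t = q t then 1 else 0 :=
      fun t => (hN _).trans (trace_single_one _ _)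
    simp [htr, Fintype.prod_boole, funext_iff]
  simp only [Matrix.trace, Matrix.diag, tensorPow, LinearMap.coe_mk, AddHom.coe_mk,
    Matrix.of_apply]
  rw [Finset.sum_comm]
  simp_rw [Finset.sum_comm (γ := Fin n → β), ← Finset.mul_sum, hunit]
  simp

end Channel

lemma IsCPTP.isDensity_prodChannel {α β₁ β₂ : Type*} [Fintype α] [DecidableEq α] [Fintype β₁]
    [Fintype β₂] {N : Matrix α α ℂ →ₗ[ℂ] Matrix (β₁ × β₂) (β₁ × β₂) ℂ} (hN : IsCPTP N)
    (n : ℕ) {ρ : Matrix (Fin n → α) (Fin n → α) ℂ} (hρ : IsDensity ρ) :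
    IsDensity (prodChannel N n ρ) := by
  let e := Equiv.arrowProdEquivProdArrow (Fin n) (fun _ => β₁) (fun _ => β₂)
  change IsDensity ((tensorPow N n ρ).submatrix e.symm e.symm)
  obtain ⟨L, hL⟩ := exists_kraus_tensorPow hN.1 n
  refine ⟨?_, ?_⟩
  · rw [hL]
    exact (Matrix.posSemidef_sum _ fun f _ => hρ.1.mul_mul_conjTranspose_same (L f)).submatrix _
  · rw [← hρ.2, ← trace_tensorPow hN.2 n ρ]
    exact Equiv.sum_comp e.symm fun x => tensorPow N n ρ x x

lemma kronecker_sub {l m p q R : Type*} [Ring R] (A : Matrix l m R) (B₁ B₂ : Matrix p q R) :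
    A ⊗ₖ (B₁ - B₂) = A ⊗ₖ B₁ - A ⊗ₖ B₂ := by
  ext
  simp [mul_sub]

lemma sub_kronecker {l m p q R : Type*} [Ring R] (A₁ A₂ : Matrix l m R) (B : Matrix p q R) :
    (A₁ - A₂) ⊗ₖ B = A₁ ⊗ₖ B - A₂ ⊗ₖ B := by
  ext
  simp [sub_mul]

lemma one_sub_re_trace_kronecker_mul_le {α β : Type*} [Fintype α] [DecidableEq α] [Fintype β]
    [DecidableEq β] {A : Matrix α α ℂ} {B : Matrix β β ℂ} {ρ : Matrix (α × β) (α × β) ℂ}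
    (hA : (1 - A).PosSemidef) (hB : (1 - B).PosSemidef) (hρ : IsDensity ρ) :
    1 - ((A ⊗ₖ B) * ρ).trace.re
      ≤ (1 - ((A ⊗ₖ (1 : Matrix β β ℂ)) * ρ).trace.re)
        + (1 - (((1 : Matrix α α ℂ) ⊗ₖ B) * ρ).trace.re) := by
  have h := (Complex.le_def.mp (trace_mul_nonneg (hA.kronecker hB) hρ.1)).1
  rw [sub_kronecker, kronecker_sub, kronecker_sub, Matrix.one_kronecker_one] at h
  simp only [Matrix.sub_mul, Matrix.one_mul, Matrix.trace_sub, hρ.2, Complex.sub_re,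
    Complex.one_re, Complex.zero_re] at h
  linarith

section Marginals

variable {γ₁ γ₂ S₁ S₂ : Type*} [Fintype γ₁] [DecidableEq γ₁] [Fintype γ₂] [DecidableEq γ₂]
  [Fintype S₁] [DecidableEq S₁] [Fintype S₂] [DecidableEq S₂]

lemma trace_kronecker_one_mul_reindex_kronecker (Λ : Matrix (γ₁ × S₁) (γ₁ × S₁) ℂ)
    (ρ : Matrix (γ₁ × γ₂) (γ₁ × γ₂) ℂ) (τ : Matrix (S₁ × S₂) (S₁ × S₂) ℂ) :
    ((Λ ⊗ₖ (1 : Matrix (γ₂ × S₂) (γ₂ × S₂) ℂ)) *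
      Matrix.reindex (Equiv.prodProdProdComm γ₁ γ₂ S₁ S₂) (Equiv.prodProdProdComm γ₁ γ₂ S₁ S₂)
        (ρ ⊗ₖ τ)).trace
      = ((ptrAgainst (ptr₂ τ) Λ ⊗ₖ (1 : Matrix γ₂ γ₂ ℂ)) * ρ).trace := by
  rw [trace_kronecker_one_mul, ptr₂_reindex_prodProdProdComm_kronecker, ← trace_ptrAgainst_mul,
    trace_kronecker_one_mul]

lemma trace_one_kronecker_mul_reindex_kronecker (Γ : Matrix (γ₂ × S₂) (γ₂ × S₂) ℂ)
    (ρ : Matrix (γ₁ × γ₂) (γ₁ × γ₂) ℂ) (τ : Matrix (S₁ × S₂) (S₁ × S₂) ℂ) :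
    (((1 : Matrix (γ₁ × S₁) (γ₁ × S₁) ℂ) ⊗ₖ Γ) *
      Matrix.reindex (Equiv.prodProdProdComm γ₁ γ₂ S₁ S₂) (Equiv.prodProdProdComm γ₁ γ₂ S₁ S₂)
        (ρ ⊗ₖ τ)).trace
      = (((1 : Matrix γ₁ γ₁ ℂ) ⊗ₖ ptrAgainst (ptr₁ τ) Γ) * ρ).trace := by
  rw [trace_one_kronecker_mul, ptr₁_reindex_prodProdProdComm_kronecker, ← trace_ptrAgainst_mul,
    trace_one_kronecker_mul]

end Marginals

namespace EACode

variable {ι β₁ β₂ : Type*} [Fintype ι] [DecidableEq ι] [Fintype β₁] [DecidableEq β₁]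
  [Fintype β₂] [DecidableEq β₂] {n M₀ M₁ s₁ s₂ : ℕ} (c : EACode ι β₁ β₂ n M₀ M₁ s₁ s₂)

def reducedDec1 (m₀ : Fin M₀) (m₁ : Fin M₁) : Matrix (Fin n → β₁) (Fin n → β₁) ℂ :=
  ptrAgainst (ptr₂ (pureState c.ent)) (c.dec1 m₀ m₁)

def reducedDec2 (m₀ : Fin M₀) : Matrix (Fin n → β₂) (Fin n → β₂) ℂ :=
  ptrAgainst (ptr₁ (pureState c.ent)) (c.dec2 m₀)

lemma isDensity_ent : IsDensity (pureState c.ent) := isDensity_pureState c.ent_norm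

lemma posSemidef_reducedDec1 (m₀ : Fin M₀) (m₁ : Fin M₁) : (c.reducedDec1 m₀ m₁).PosSemidef :=
  posSemidef_ptrAgainst c.isDensity_ent.ptr₂.1 (c.dec1_pos m₀ m₁)

lemma posSemidef_reducedDec2 (m₀ : Fin M₀) : (c.reducedDec2 m₀).PosSemidef :=
  posSemidef_ptrAgainst c.isDensity_ent.ptr₁.1 (c.dec2_pos m₀)

lemma sum_reducedDec1 : ∑ m₀, ∑ m₁, c.reducedDec1 m₀ m₁ = 1 := by
  simp only [reducedDec1, ← map_sum, c.dec1_sum]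
  exact ptrAgainst_one c.isDensity_ent.ptr₂.2

lemma sum_reducedDec2 : ∑ m₀, c.reducedDec2 m₀ = 1 := by
  simp only [reducedDec2, ← map_sum, c.dec2_sum]
  exact ptrAgainst_one c.isDensity_ent.ptr₁.2

lemma posSemidef_one_sub_dec1 (m₀ : Fin M₀) (m₁ : Fin M₁) : (1 - c.dec1 m₀ m₁).PosSemidef :=
  posSemidef_one_sub_of_sum_eq_one (f := fun m : Fin M₀ × Fin M₁ => c.dec1 m.1 m.2)
    (fun m => c.dec1_pos m.1 m.2) (by rw [Fintype.sum_prod_type]; exact c.dec1_sum) (m₀, m₁)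

lemma posSemidef_one_sub_dec2 (m₀ : Fin M₀) : (1 - c.dec2 m₀).PosSemidef :=
  posSemidef_one_sub_of_sum_eq_one c.dec2_pos c.dec2_sum m₀

lemma posSemidef_one_sub_reducedDec1 (m₀ : Fin M₀) (m₁ : Fin M₁) :
    (1 - c.reducedDec1 m₀ m₁).PosSemidef := by
  rw [← ptrAgainst_one (γ := Fin n → β₁) c.isDensity_ent.ptr₂.2, reducedDec1, ← map_sub]
  exact posSemidef_ptrAgainst c.isDensity_ent.ptr₂.1 (c.posSemidef_one_sub_dec1 m₀ m₁)

lemma posSemidef_one_sub_reducedDec2 (m₀ : Fin M₀) : (1 - c.reducedDec2 m₀).PosSemidef := by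
  rw [← ptrAgainst_one (γ := Fin n → β₂) c.isDensity_ent.ptr₁.2, reducedDec2, ← map_sub]
  exact posSemidef_ptrAgainst c.isDensity_ent.ptr₁.1 (c.posSemidef_one_sub_dec2 m₀)

def plainCode : EACode ι β₁ β₂ n M₀ M₁ 1 1 where
  enc := c.enc
  enc_density := c.enc_density
  ent _ := 1
  ent_norm := by simp
  dec1 m₀ m₁ := Matrix.reindexAlgEquiv ℂ ℂ (Equiv.prodUnique _ _).symm (c.reducedDec1 m₀ m₁)
  dec1_pos m₀ m₁ := (c.posSemidef_reducedDec1 m₀ m₁).submatrix _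
  dec1_sum := by simp only [← map_sum, c.sum_reducedDec1, map_one]
  dec2 m₀ := Matrix.reindexAlgEquiv ℂ ℂ (Equiv.prodUnique _ _).symm (c.reducedDec2 m₀)
  dec2_pos m₀ := (c.posSemidef_reducedDec2 m₀).submatrix _
  dec2_sum := by simp only [← map_sum, c.sum_reducedDec2, map_one]

lemma err_plainCode (N : Matrix ι ι ℂ →ₗ[ℂ] Matrix (β₁ × β₂) (β₁ × β₂) ℂ) (m₀ : Fin M₀)
    (m₁ : Fin M₁) : c.plainCode.err N m₀ m₁ = 1 -
      ((c.reducedDec1 m₀ m₁ ⊗ₖ c.reducedDec2 m₀) * prodChannel N n (c.enc m₀ m₁)).trace.re := by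
  simp [err, plainCode, Matrix.trace, Matrix.mul_apply, pureState, Fintype.sum_prod_type]

lemma err_plainCode_le {N : Matrix ι ι ℂ →ₗ[ℂ] Matrix (β₁ × β₂) (β₁ × β₂) ℂ} (hN : IsCPTP N)
    (m₀ : Fin M₀) (m₁ : Fin M₁) :
    c.plainCode.err N m₀ m₁ ≤ 2 * c.err N m₀ m₁ := by
  set ρ := prodChannel N n (c.enc m₀ m₁)
  set X := Matrix.reindex (Equiv.prodProdProdComm _ _ _ _) (Equiv.prodProdProdComm _ _ _ _)
    (ρ ⊗ₖ pureState c.ent)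
  have hρ : IsDensity ρ := hN.isDensity_prodChannel n (c.enc_density m₀ m₁)
  have hX : X.PosSemidef := (hρ.1.kronecker c.isDensity_ent.1).submatrix _
  have h₁ : ((c.dec1 m₀ m₁ ⊗ₖ c.dec2 m₀) * X).trace.re
      ≤ ((c.reducedDec1 m₀ m₁ ⊗ₖ (1 : Matrix _ _ ℂ)) * ρ).trace.re := by
    rw [reducedDec1, ← trace_kronecker_one_mul_reindex_kronecker]
    refine re_trace_mul_le_of_posSemidef_sub ?_ hX
    rw [← kronecker_sub]
    exact (c.dec1_pos m₀ m₁).kronecker (c.posSemidef_one_sub_dec2 m₀)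
  have h₂ : ((c.dec1 m₀ m₁ ⊗ₖ c.dec2 m₀) * X).trace.re
      ≤ (((1 : Matrix _ _ ℂ) ⊗ₖ c.reducedDec2 m₀) * ρ).trace.re := by
    rw [reducedDec2, ← trace_one_kronecker_mul_reindex_kronecker]
    refine re_trace_mul_le_of_posSemidef_sub ?_ hX
    rw [← sub_kronecker]
    exact (c.posSemidef_one_sub_dec1 m₀ m₁).kronecker (c.dec2_pos m₀)
  have hunion := one_sub_re_trace_kronecker_mul_le (c.posSemidef_one_sub_reducedDec1 m₀ m₁)
    (c.posSemidef_one_sub_reducedDec2 m₀) hρ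
  rw [err_plainCode, err]
  linarith

end EACode

/-- Entanglement shared between the two decoders does not increase the
classical capacity region of a quantum broadcast channel with degraded message sets:
the capacity region with entangled decoders equals the capacity region without any
shared entanglement. -/
theorem entangled_decoders_no_gain {d d₁ d₂ : ℕ}
    (N : Matrix (Fin d) (Fin d) ℂ →ₗ[ℂ] Matrix (Fin d₁ × Fin d₂) (Fin d₁ × Fin d₂) ℂ)
    (hN : IsCPTP N) :
    {r : ℝ × ℝ | eaAchievable N r} = {r : ℝ × ℝ | plainAchievable N r} := by
  ext r
  constructor
  · intro h ε hε
    obtain ⟨n₀, H⟩ := h (ε / 2) (half_pos hε)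
    refine ⟨n₀, fun n hn => ?_⟩
    obtain ⟨M₀, M₁, _, _, c, h₀, h₁, herr⟩ := H n hn
    refine ⟨M₀, M₁, c.plainCode, h₀, h₁, fun m₀ m₁ => ?_⟩
    linarith [c.err_plainCode_le hN m₀ m₁, herr m₀ m₁]
  · intro h ε hε
    obtain ⟨n₀, H⟩ := h ε hε
    refine ⟨n₀, fun n hn => ?_⟩
    obtain ⟨M₀, M₁, c, hc⟩ := H n hn
    exact ⟨M₀, M₁, 1, 1, c, hc⟩

end QBC
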